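/- For every angle θ with 0 < θ < π, there exists a tiling of the Euclidean plane ℝ² by isometric copies of the unit equilateral triangle T and the unit rhombus R(θ), in which both prototiles are used (at least one tile congruent to T and at least one congruent to R(θ) occur), and which is non-periodic: there is no nonzero vector v ∈ ℝ² such that translating every tile by v maps the set of tiles onto itself. -/

import Mathlib

noncomputable section

open Set Metric

/-- The Euclidean plane ℝ². -/
abbrev Pt : Type := EuclideanSpace ℝ (Fin 2)

/-- A point of the plane from coordinates. -/
def pt (a b : ℝ) : Pt := WithLp.toLp 2 ![a, b]

/-- The unit equilateral triangle. -/
def uT : Set Pt := convexHull ℝ {pt 0 0, pt 1 0, pt (1/2) (Real.sqrt 3 / 2)}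

/-- The unit rhombus of angle θ. -/
def uR (θ : ℝ) : Set Pt :=
  convexHull ℝ
    {pt 0 0, pt 1 0, pt (Real.cos θ) (Real.sin θ), pt (1 + Real.cos θ) (Real.sin θ)}

/-- `𝒯` is a tiling of the plane by isometric copies of the prototiles in `protos`. -/
def IsTilingBy (𝒯 : Set (Set Pt)) (protos : Set (Set Pt)) : Prop :=
  𝒯.Countable ∧ ⋃₀ 𝒯 = univ ∧
  (∀ t ∈ 𝒯, ∀ s ∈ 𝒯, t ≠ s → interior t ∩ interior s = ∅) ∧
  (∀ t ∈ 𝒯, ∃ P ∈ protos, ∃ f : Pt ≃ᵢ Pt, t = f '' P)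

/-- Translating every tile of `𝒯` by `v`. -/
def translateTiles (v : Pt) (𝒯 : Set (Set Pt)) : Set (Set Pt) :=
  (fun t => (fun x => x + v) '' t) '' 𝒯

/-- `𝒯` is non-periodic: no nonzero translation maps the set of tiles onto itself. -/
def Nonperiodic (𝒯 : Set (Set Pt)) : Prop :=
  ∀ v : Pt, v ≠ 0 → translateTiles v 𝒯 ≠ 𝒯


/-!
The rays at angles `0`, `θ`, `θ + π / 3` and `-2π / 3` cut the plane into four sectors, of angles
`θ`, `π / 3`, `π - θ` and `2π / 3`. The first and the third are tiled by the lattice of unit rhombi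
spanned by their bounding rays, the other two by unit equilateral triangles (the lattice
parallelograms spanned by the bounding rays, each cut along a diagonal).

A translation by `v` preserving the tiling maps rhombi to rhombi and triangles to triangles, since
rhombi have diameter `> 1` and triangles `≤ 1`. Hence it preserves the set of points lying both on
a rhombus and on a triangle. That set lies on the four lines through the rays and contains the rays
at angles `0` and `θ`; pigeonholing the translates of the points `n • dir 0` (and `n • dir θ`) over
the four lines shows that `v` is parallel to both rays, so `v = 0`.
-/

namespace TriangleRhombusTiling

open Real

lemma disjoint_interior_of_le_of_ge {E : Type*} [AddCommGroup E] [TopologicalSpace E]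
    [ContinuousAdd E] [Module ℝ E] [ContinuousSMul ℝ E] {f : StrongDual ℝ E} (hf : f ≠ 0)
    {c : ℝ} {A B : Set E} (hA : ∀ x ∈ A, f x ≤ c) (hB : ∀ x ∈ B, c ≤ f x) :
    Disjoint (interior A) (interior B) := by
  have hopen := f.isOpenMap_of_ne_zero hf
  have hA' : f '' A ⊆ Iic c := by rintro _ ⟨x, hx, rfl⟩; exact hA x hx
  have hB' : f '' B ⊆ Ici c := by rintro _ ⟨x, hx, rfl⟩; exact hB x hx
  have hlt : ∀ x ∈ interior A, f x < c := fun x hx => by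
    simpa using interior_mono hA' (hopen.image_interior_subset A ⟨x, hx, rfl⟩)
  have hgt : ∀ x ∈ interior B, c < f x := fun x hx => by
    simpa using interior_mono hB' (hopen.image_interior_subset B ⟨x, hx, rfl⟩)
  exact Set.disjoint_left.2 fun x hxA hxB => (hlt x hxA).not_ge (hgt x hxB).le

lemma pairwise_disjoint_interior_iUnion {X ι : Type*} [TopologicalSpace X] {R : ι → Set X}
    {S : ι → Set (Set X)} (hR : Pairwise fun i j => Disjoint (interior (R i)) (interior (R j)))
    (hSR : ∀ i, ∀ t ∈ S i, t ⊆ R i)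
    (hS : ∀ i, (S i).Pairwise fun t t' => Disjoint (interior t) (interior t')) :
    (⋃ i, S i).Pairwise fun t t' => Disjoint (interior t) (interior t') := by
  intro t ht t' ht' htt'
  obtain ⟨i, hi⟩ := mem_iUnion.1 ht
  obtain ⟨j, hj⟩ := mem_iUnion.1 ht'
  rcases eq_or_ne i j with rfl | hij
  · exact hS i hi hj htt'
  · exact (hR hij).mono (interior_mono (hSR i t hi)) (interior_mono (hSR j t' hj))

lemma mem_convexHull_triple {E : Type*} [AddCommGroup E] [Module ℝ E] {x y z : E} {a b c : ℝ}
    (ha : 0 ≤ a) (hb : 0 ≤ b) (hc : 0 ≤ c) (habc : a + b + c = 1) :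
    a • x + b • y + c • z ∈ convexHull ℝ {x, y, z} := by
  have := (convex_convexHull ℝ {x, y, z}).sum_mem (t := Finset.univ) (w := ![a, b, c])
    (z := ![x, y, z]) (by simp [Fin.forall_fin_succ, ha, hb, hc])
    (by simpa [Fin.sum_univ_three] using habc)
    (by simp [Fin.forall_fin_succ, subset_convexHull ℝ _ (by simp : x ∈ ({x, y, z} : Set E)),
      subset_convexHull ℝ _ (by simp : y ∈ ({x, y, z} : Set E)),
      subset_convexHull ℝ _ (by simp : z ∈ ({x, y, z} : Set E))])
  simpa [Fin.sum_univ_three, add_assoc] using this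

lemma image_convexHull_isometryEquiv {E : Type*} [NormedAddCommGroup E] [NormedSpace ℝ E]
    (f : E ≃ᵢ E) (S : Set E) : f '' convexHull ℝ S = convexHull ℝ (f '' S) := by
  simpa using f.toRealAffineIsometryEquiv.toAffineEquiv.toAffineMap.image_convexHull S

lemma add_mem_sUnion_sep {X : Type*} [Add X] {𝒯 : Set (Set X)} {P : Set X → Prop} {v : X}
    (h𝒯 : ∀ t ∈ 𝒯, (· + v) '' t ∈ 𝒯) (hP : ∀ t, P t → P ((· + v) '' t)) {p : X}
    (hp : p ∈ ⋃₀ {t ∈ 𝒯 | P t}) : p + v ∈ ⋃₀ {t ∈ 𝒯 | P t} := by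
  obtain ⟨t, ⟨ht, hPt⟩, hpt⟩ := hp
  exact ⟨_, ⟨h𝒯 t ht, hP t hPt⟩, mem_image_of_mem _ hpt⟩

/-! ### Coordinates and the cross product -/

@[simp] lemma pt_apply_zero (a b : ℝ) : pt a b 0 = a := rfl

@[simp] lemma pt_apply_one (a b : ℝ) : pt a b 1 = b := rfl

lemma ext_pt {p q : Pt} (h0 : p 0 = q 0) (h1 : p 1 = q 1) : p = q := by
  ext i; fin_cases i <;> assumption

def cross : Pt →ₗ[ℝ] Pt →ₗ[ℝ] ℝ :=
  LinearMap.mk₂ ℝ (fun p q => p 0 * q 1 - p 1 * q 0)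
    (fun _ _ _ => by simp only [PiLp.add_apply]; ring)
    (fun _ _ _ => by simp only [PiLp.smul_apply, smul_eq_mul]; ring)
    (fun _ _ _ => by simp only [PiLp.add_apply]; ring)
    (fun _ _ _ => by simp only [PiLp.smul_apply, smul_eq_mul]; ring)

lemma cross_apply (p q : Pt) : cross p q = p 0 * q 1 - p 1 * q 0 := rfl

@[simp] lemma cross_self (p : Pt) : cross p p = 0 := by
  rw [cross_apply]; ring

lemma cross_swap (p q : Pt) : cross q p = -cross p q := by
  simp only [cross_apply]; ring

/-- The vector identity `cross b c • a + cross c a • b + cross a b • c = 0`, paired with `g`. -/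
lemma cross_cyclic (a b c g : Pt) :
    cross b c * cross g a + cross c a * cross g b + cross a b * cross g c = 0 := by
  simp only [cross_apply]; ring

lemma cross_ne_zero_of_ne_zero {g : Pt} (hg : g ≠ 0) : cross g ≠ 0 := by
  intro h
  have h' : cross g (pt (-g 1) (g 0)) = g 0 ^ 2 + g 1 ^ 2 := by
    rw [cross_apply, pt_apply_zero, pt_apply_one]; ring
  rw [h, LinearMap.zero_apply] at h'
  exact hg (ext_pt (by rw [PiLp.zero_apply]; nlinarith [sq_nonneg (g 0), sq_nonneg (g 1)])
    (by rw [PiLp.zero_apply]; nlinarith [sq_nonneg (g 0), sq_nonneg (g 1)]))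

lemma cross_eq_zero_of_cross_eq_zero {g a b : Pt} (hg : g ≠ 0) (ha : cross g a = 0)
    (hb : cross g b = 0) : cross a b = 0 := by
  by_contra hab
  rw [cross_apply] at ha hb hab
  refine hg (ext_pt ?_ ?_)
  · refine (mul_eq_zero.1 (?_ : g 0 * (a 0 * b 1 - a 1 * b 0) = 0)).resolve_right hab
    linear_combination a 0 * hb - b 0 * ha
  · refine (mul_eq_zero.1 (?_ : g 1 * (a 0 * b 1 - a 1 * b 0) = 0)).resolve_right hab
    linear_combination a 1 * hb - b 1 * ha

lemma ne_zero_of_cross_ne_zero_left {v w : Pt} (h : cross v w ≠ 0) : v ≠ 0 := by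
  rintro rfl; simp at h

lemma ne_zero_of_cross_ne_zero_right {v w : Pt} (h : cross v w ≠ 0) : w ≠ 0 := by
  rintro rfl; simp at h

/-- Two of the points `n • a + v` lie on the same line `L i`, which is then parallel to both `a`
and `v`. -/
lemma cross_eq_zero_of_add_mem {ι : Type*} [Finite ι] {L : ι → Pt} (hL : ∀ i, L i ≠ 0)
    {Z : Set Pt} (hZ : ∀ p ∈ Z, ∃ i, cross (L i) p = 0) {a v : Pt} (hv : ∀ p ∈ Z, p + v ∈ Z)
    (ha : ∀ n : ℕ, (n : ℝ) • a ∈ Z) : cross a v = 0 := by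
  choose f hf using fun n : ℕ => hZ _ (hv _ (ha n))
  obtain ⟨m, n, hmn, hfmn⟩ := Finite.exists_ne_map_eq_of_infinite f
  have hm := hf m
  have hn := hf n
  rw [hfmn] at hm
  simp only [map_add, map_smul, smul_eq_mul] at hm hn
  have hLa : cross (L (f n)) a = 0 := by
    refine (mul_eq_zero.1 (?_ : ((m : ℝ) - n) * cross (L (f n)) a = 0)).resolve_left
      (sub_ne_zero.2 (Nat.cast_injective.ne hmn))
    linarith
  rw [hLa, mul_zero, zero_add] at hn
  exact cross_eq_zero_of_cross_eq_zero (hL _) hLa hn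

lemma disjoint_interior_of_cross_le_of_ge {g : Pt} (hg : g ≠ 0) {c : ℝ} {A B : Set Pt}
    (hA : ∀ p ∈ A, cross g p ≤ c) (hB : ∀ p ∈ B, c ≤ cross g p) :
    Disjoint (interior A) (interior B) :=
  disjoint_interior_of_le_of_ge (f := LinearMap.toContinuousLinearMap (cross g))
    (by simpa using cross_ne_zero_of_ne_zero hg) hA hB

lemma cross_le_of_mem_convexHull {S : Set Pt} {g : Pt} {c : ℝ} (h : ∀ p ∈ S, cross g p ≤ c)
    {p : Pt} (hp : p ∈ convexHull ℝ S) : cross g p ≤ c :=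
  convexHull_min h ((convex_Iic c).linear_preimage (cross g)) hp

lemma le_cross_of_mem_convexHull {S : Set Pt} {g : Pt} {c : ℝ} (h : ∀ p ∈ S, c ≤ cross g p)
    {p : Pt} (hp : p ∈ convexHull ℝ S) : c ≤ cross g p :=
  convexHull_min h ((convex_Ici c).linear_preimage (cross g)) hp

/-! ### Cones and fans -/

/-- The cone spanned by `v` and `w`, provided `0 < cross v w`. -/
def cone (v w : Pt) : Set Pt := {p | 0 ≤ cross p w ∧ 0 ≤ cross v p}

variable {v w : Pt}

lemma smul_add_smul_mem_cone (hvw : 0 ≤ cross v w) {a b : ℝ} (ha : 0 ≤ a) (hb : 0 ≤ b) :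
    a • v + b • w ∈ cone v w := by
  constructor <;> simp only [map_add, map_smul, LinearMap.add_apply, LinearMap.smul_apply,
    smul_eq_mul, cross_self] <;> nlinarith [cross_swap v w]

lemma cross_nonneg_of_mem_cone (hvw : 0 < cross v w) {g p : Pt} (hv : 0 ≤ cross g v)
    (hw : 0 ≤ cross g w) (hp : p ∈ cone v w) : 0 ≤ cross g p := by
  have := cross_cyclic v w p g
  rw [cross_swap p w, cross_swap v p] at this
  nlinarith [mul_nonneg hp.1 hv, mul_nonneg hp.2 hw]

lemma cross_eq_zero_of_mem_cone_of_mem_cone {u p : Pt} (h₁ : p ∈ cone u v) (h₂ : p ∈ cone v w) :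
    cross v p = 0 := by
  linarith [h₁.1, h₂.2, cross_swap p v]

lemma disjoint_interior_cone_of_adjacent {u : Pt} (hv : v ≠ 0) :
    Disjoint (interior (cone u v)) (interior (cone v w)) :=
  disjoint_interior_of_cross_le_of_ge hv (fun p hp => by linarith [hp.1, cross_swap p v])
    fun p hp => hp.2

lemma disjoint_interior_cone_of_opposite {a b c d : Pt} (hab : 0 < cross a b)
    (hbc : 0 < cross b c) (hcd : 0 < cross c d) (hda : 0 < cross d a) :
    Disjoint (interior (cone a b)) (interior (cone c d)) := by
  rcases le_total 0 (cross b d) with hbd | hdb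
  · exact disjoint_interior_of_cross_le_of_ge (ne_zero_of_cross_ne_zero_right hab.ne')
      (fun p hp => by linarith [hp.1, cross_swap p b])
      fun p hp => cross_nonneg_of_mem_cone hcd hbc.le hbd hp
  · refine (disjoint_interior_of_cross_le_of_ge (ne_zero_of_cross_ne_zero_right hcd.ne')
      (fun p hp => by linarith [hp.1, cross_swap p d])
      fun p hp => cross_nonneg_of_mem_cone hab hda.le ?_ hp).symm
    linarith [cross_swap b d]

section Fan

variable {r : Fin 4 → Pt} (hr : ∀ i, 0 < cross (r i) (r (i + 1)))
include hr

/-- Four consecutive positive turns add up to exactly one full turn. -/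
lemma not_forall_cross_neg (p : Pt) : ¬ ∀ i, cross p (r i) < 0 := by
  intro h
  have h₀ := hr 0
  have h₁ := hr 1
  have h₂ := hr 2
  have h₃ := hr 3
  simp only [Fin.reduceAdd] at h₀ h₁ h₂ h₃
  have e₁ := cross_cyclic (r 0) (r 1) (r 3) p
  have e₂ := cross_cyclic (r 1) (r 2) (r 3) p
  rw [cross_swap (r 1) (r 3)] at e₂
  rcases le_total 0 (cross (r 1) (r 3)) with h13 | h31
  · nlinarith [mul_neg_of_pos_of_neg h₃ (h 1), mul_neg_of_pos_of_neg h₀ (h 3),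
      mul_nonpos_of_nonneg_of_nonpos h13 (h 0).le]
  · nlinarith [mul_neg_of_pos_of_neg h₂ (h 1), mul_neg_of_pos_of_neg h₁ (h 3),
      mul_nonpos_of_nonneg_of_nonpos (neg_nonneg.2 h31) (h 2).le]

lemma exists_mem_cone (p : Pt) : ∃ i, p ∈ cone (r i) (r (i + 1)) := by
  obtain ⟨i₀, hi₀⟩ : ∃ i, 0 ≤ cross p (r i) := by simpa using not_forall_cross_neg hr p
  obtain ⟨i₁, hi₁⟩ : ∃ i, cross p (r i) ≤ 0 := by simpa using not_forall_cross_neg hr (-p)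
  by_contra! hno
  have step : ∀ i, cross p (r i) ≤ 0 → cross p (r (i + 1)) < 0 := fun i hi => by
    by_contra! h
    exact hno i ⟨h, by linarith [cross_swap p (r i)]⟩
  have h₁ := step _ hi₁
  have h₂ := step _ h₁.le
  have h₃ := step _ h₂.le
  have h₄ := step _ h₃.le
  simp only [add_assoc, Fin.reduceAdd, add_zero] at h₂ h₃ h₄
  have hall : ∀ k : Fin 4, cross p (r (i₁ + k)) < 0 := by
    intro k; fin_cases k <;> simpa
  have := hall (i₀ - i₁)
  rw [add_sub_cancel] at this
  linarith

lemma pairwise_disjoint_interior_cone :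
    Pairwise fun i j => Disjoint (interior (cone (r i) (r (i + 1))))
      (interior (cone (r j) (r (j + 1)))) := by
  have h₀ := hr 0
  have h₁ := hr 1
  have h₂ := hr 2
  have h₃ := hr 3
  simp only [Fin.reduceAdd] at h₀ h₁ h₂ h₃
  have hne (k : Fin 4) : r k ≠ 0 := ne_zero_of_cross_ne_zero_left (hr k).ne'
  have opp₀ := disjoint_interior_cone_of_opposite h₀ h₁ h₂ h₃
  have opp₁ := disjoint_interior_cone_of_opposite h₁ h₂ h₃ h₀
  intro i j hij
  fin_cases i <;> fin_cases j
  exacts [absurd rfl hij, disjoint_interior_cone_of_adjacent (hne 1), opp₀,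
    (disjoint_interior_cone_of_adjacent (hne 0)).symm,
    (disjoint_interior_cone_of_adjacent (hne 1)).symm, absurd rfl hij,
    disjoint_interior_cone_of_adjacent (hne 2), opp₁,
    opp₀.symm, (disjoint_interior_cone_of_adjacent (hne 2)).symm, absurd rfl hij,
    disjoint_interior_cone_of_adjacent (hne 3),
    disjoint_interior_cone_of_adjacent (hne 0), opp₁.symm,
    (disjoint_interior_cone_of_adjacent (hne 3)).symm, absurd rfl hij]

end Fan

/-! ### Lattice tilings of a cone -/

def par (b v w : Pt) : Set Pt := convexHull ℝ {b, b + v, b + w, b + v + w}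

lemma exists_of_mem_par {b p : Pt} (hp : p ∈ par b v w) :
    ∃ a ∈ Icc (0 : ℝ) 1, ∃ c ∈ Icc (0 : ℝ) 1, p = b + a • v + c • w := by
  refine (convexHull_min (t := {q | ∃ a ∈ Icc (0 : ℝ) 1, ∃ c ∈ Icc (0 : ℝ) 1,
    q = b + a • v + c • w}) ?_ ?_) hp
  · rintro q (rfl | rfl | rfl | rfl)
    · exact ⟨0, by simp, 0, by simp, by simp⟩
    · exact ⟨1, by simp, 0, by simp, by simp⟩
    · exact ⟨0, by simp, 1, by simp, by simp⟩
    · exact ⟨1, by simp, 1, by simp, by simp⟩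
  · rintro _ ⟨a, ha, c, hc, rfl⟩ _ ⟨a', ha', c', hc', rfl⟩ s t hs ht hst
    refine ⟨s * a + t * a', convex_Icc 0 1 ha ha' hs ht hst,
      s * c + t * c', convex_Icc 0 1 hc hc' hs ht hst, ?_⟩
    linear_combination (norm := module) hst • b

lemma par_eq_par_add (b : Pt) : par b v w = par (b + v) w (-v) := by
  rw [par, par, add_neg_cancel_right, show b + v + w + -v = b + w by abel]
  congr 1
  ext p
  simp only [mem_insert_iff, mem_singleton_iff]
  tauto

def node (v w : Pt) (n : ℕ × ℕ) : Pt := (n.1 : ℝ) • v + (n.2 : ℝ) • w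

lemma node_natCast_zero (v w : Pt) (n : ℕ) : node v w (n, 0) = (n : ℝ) • v := by
  simp [node]

lemma node_zero_natCast (v w : Pt) (n : ℕ) : node v w (0, n) = (n : ℝ) • w := by
  simp [node]

lemma cross_node_add_fst (n : ℕ × ℕ) (a c : ℝ) :
    cross w (node v w n + a • v + c • w) = -((n.1 + a) * cross v w) := by
  simp only [node, map_add, map_smul, smul_eq_mul, cross_self, cross_swap v w]; ring

lemma cross_node_add_snd (n : ℕ × ℕ) (a c : ℝ) :
    cross v (node v w n + a • v + c • w) = (n.2 + c) * cross v w := by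
  simp only [node, map_add, map_smul, smul_eq_mul, cross_self]; ring

lemma par_subset_cone (hvw : 0 ≤ cross v w) (n : ℕ × ℕ) : par (node v w n) v w ⊆ cone v w := by
  intro p hp
  obtain ⟨a, ha, c, hc, rfl⟩ := exists_of_mem_par hp
  convert smul_add_smul_mem_cone hvw (add_nonneg (Nat.cast_nonneg n.1) ha.1)
    (add_nonneg (Nat.cast_nonneg n.2) hc.1) using 1
  simp only [node]; module

lemma cross_smul_eq_add (p : Pt) : cross v w • p = cross p w • v + cross v p • w := by
  refine ext_pt ?_ ?_ <;>
  · simp only [PiLp.add_apply, PiLp.smul_apply, smul_eq_mul, cross_apply]; ring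

lemma exists_node_of_mem_cone (hvw : 0 < cross v w) {p : Pt} (hp : p ∈ cone v w) :
    ∃ n : ℕ × ℕ, ∃ a ∈ Icc (0 : ℝ) 1, ∃ c ∈ Icc (0 : ℝ) 1, p = node v w n + a • v + c • w := by
  set α := cross p w / cross v w
  set β := cross v p / cross v w
  have hα : 0 ≤ α := div_nonneg hp.1 hvw.le
  have hβ : 0 ≤ β := div_nonneg hp.2 hvw.le
  refine ⟨(⌊α⌋₊, ⌊β⌋₊), α - ⌊α⌋₊, ⟨by linarith [Nat.floor_le hα], by
    linarith [Nat.lt_floor_add_one α]⟩, β - ⌊β⌋₊, ⟨by linarith [Nat.floor_le hβ], by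
    linarith [Nat.lt_floor_add_one β]⟩, ?_⟩
  have hp : p = α • v + β • w := by
    rw [← inv_smul_smul₀ hvw.ne' p, cross_smul_eq_add, smul_add, smul_smul, smul_smul,
      inv_mul_eq_div, inv_mul_eq_div]
  rw [hp, node]; module

lemma disjoint_interior_par_of_fst_lt (hvw : 0 < cross v w) {n n' : ℕ × ℕ} (h : n.1 < n'.1) :
    Disjoint (interior (par (node v w n) v w)) (interior (par (node v w n') v w)) := by
  have h' : (n.1 : ℝ) + 1 ≤ n'.1 := by exact_mod_cast h
  refine (disjoint_interior_of_cross_le_of_ge (g := w) (c := -((n.1 + 1) * cross v w))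
    (ne_zero_of_cross_ne_zero_right hvw.ne') ?_ ?_).symm
  · intro p hp
    obtain ⟨a, ha, c, -, rfl⟩ := exists_of_mem_par hp
    rw [cross_node_add_fst]; nlinarith [ha.1]
  · intro p hp
    obtain ⟨a, ha, c, -, rfl⟩ := exists_of_mem_par hp
    rw [cross_node_add_fst]; nlinarith [ha.2]

lemma disjoint_interior_par_of_snd_lt (hvw : 0 < cross v w) {n n' : ℕ × ℕ} (h : n.2 < n'.2) :
    Disjoint (interior (par (node v w n) v w)) (interior (par (node v w n') v w)) := by
  have h' : (n.2 : ℝ) + 1 ≤ n'.2 := by exact_mod_cast h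
  refine disjoint_interior_of_cross_le_of_ge (g := v) (c := (n.2 + 1) * cross v w)
    (ne_zero_of_cross_ne_zero_left hvw.ne') ?_ ?_
  · intro p hp
    obtain ⟨a, -, c, hc, rfl⟩ := exists_of_mem_par hp
    rw [cross_node_add_snd]; nlinarith [hc.2]
  · intro p hp
    obtain ⟨a, -, c, hc, rfl⟩ := exists_of_mem_par hp
    rw [cross_node_add_snd]; nlinarith [hc.1]

lemma pairwise_disjoint_interior_par (hvw : 0 < cross v w) :
    Pairwise fun n n' : ℕ × ℕ =>
      Disjoint (interior (par (node v w n) v w)) (interior (par (node v w n') v w)) := by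
  rintro ⟨j, k⟩ ⟨j', k'⟩ hne
  rcases lt_trichotomy j j' with hj | rfl | hj
  · exact disjoint_interior_par_of_fst_lt hvw hj
  · rcases lt_trichotomy k k' with hk | rfl | hk
    · exact disjoint_interior_par_of_snd_lt hvw hk
    · exact absurd rfl hne
    · exact (disjoint_interior_par_of_snd_lt hvw hk).symm
  · exact (disjoint_interior_par_of_fst_lt hvw hj).symm

structure IsCellPattern (C : Pt → Pt → Pt → Set (Set Pt)) : Prop where
  finite (b v w : Pt) : (C b v w).Finite
  subset_par (b v w : Pt) : ∀ t ∈ C b v w, t ⊆ par b v w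
  pairwise_disjoint_interior (b v w : Pt) : 0 < cross v w →
    (C b v w).Pairwise fun t t' => Disjoint (interior t) (interior t')
  mem_sUnion (b v w : Pt) {a c : ℝ} : a ∈ Icc (0 : ℝ) 1 → c ∈ Icc (0 : ℝ) 1 →
    b + a • v + c • w ∈ ⋃₀ C b v w

def antidiagHalves (b v w : Pt) : Set (Set Pt) :=
  {convexHull ℝ {b, b + v, b + w}, convexHull ℝ {b + v, b + w, b + v + w}}

def diagHalves (b v w : Pt) : Set (Set Pt) :=
  {convexHull ℝ {b, b + v, b + v + w}, convexHull ℝ {b, b + w, b + v + w}}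

def parCell (b v w : Pt) : Set (Set Pt) := {par b v w}

lemma isCellPattern_antidiagHalves : IsCellPattern antidiagHalves where
  finite _ _ _ := (finite_singleton _).insert _
  subset_par b v w := by
    rintro t (rfl | rfl) <;> refine convexHull_mono fun p => ?_ <;>
      simp only [mem_insert_iff, mem_singleton_iff] <;> tauto
  pairwise_disjoint_interior b v w hvw := by
    have hg : v - w ≠ 0 := ne_zero_of_cross_ne_zero_left (w := w) (by simpa using hvw.ne')
    have hsep := disjoint_interior_of_cross_le_of_ge hg (c := cross (v - w) b + cross v w)
      (A := convexHull ℝ {b, b + v, b + w}) (B := convexHull ℝ {b + v, b + w, b + v + w})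
      (fun _ => cross_le_of_mem_convexHull <| by
        rintro q (rfl | rfl | rfl) <;>
          simp only [map_add, map_sub, LinearMap.sub_apply, cross_self] <;>
          linarith [cross_swap v w])
      (fun _ => le_cross_of_mem_convexHull <| by
        rintro q (rfl | rfl | rfl) <;>
          simp only [map_add, map_sub, LinearMap.sub_apply, cross_self] <;>
          linarith [cross_swap v w])
    exact pairwise_pair.2 fun _ => ⟨hsep, hsep.symm⟩
  mem_sUnion b v w a c ha hc := by
    rcases le_total (a + c) 1 with h | h
    · refine ⟨_, Or.inl rfl, ?_⟩
      convert mem_convexHull_triple (x := b) (y := b + v) (z := b + w)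
        (by linarith : 0 ≤ 1 - a - c) ha.1 hc.1 (by ring) using 1
      module
    · refine ⟨_, Or.inr rfl, ?_⟩
      convert mem_convexHull_triple (x := b + v) (y := b + w) (z := b + v + w)
        (sub_nonneg.2 hc.2) (sub_nonneg.2 ha.2) (by linarith : 0 ≤ a + c - 1) (by ring) using 1
      module

lemma isCellPattern_diagHalves : IsCellPattern diagHalves where
  finite _ _ _ := (finite_singleton _).insert _
  subset_par b v w := by
    rintro t (rfl | rfl) <;> refine convexHull_mono fun p => ?_ <;>
      simp only [mem_insert_iff, mem_singleton_iff] <;> tauto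
  pairwise_disjoint_interior b v w hvw := by
    have hg : v + w ≠ 0 := ne_zero_of_cross_ne_zero_left (w := w) (by simpa using hvw.ne')
    have hsep := disjoint_interior_of_cross_le_of_ge hg (c := cross (v + w) b)
      (A := convexHull ℝ {b, b + v, b + v + w}) (B := convexHull ℝ {b, b + w, b + v + w})
      (fun _ => cross_le_of_mem_convexHull <| by
        rintro q (rfl | rfl | rfl) <;> simp only [map_add, LinearMap.add_apply, cross_self] <;>
          linarith [cross_swap v w])
      (fun _ => le_cross_of_mem_convexHull <| by
        rintro q (rfl | rfl | rfl) <;> simp only [map_add, LinearMap.add_apply, cross_self] <;>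
          linarith [cross_swap v w])
    exact pairwise_pair.2 fun _ => ⟨hsep, hsep.symm⟩
  mem_sUnion b v w a c ha hc := by
    rcases le_total c a with h | h
    · refine ⟨_, Or.inl rfl, ?_⟩
      convert mem_convexHull_triple (x := b) (y := b + v) (z := b + v + w)
        (sub_nonneg.2 ha.2) (sub_nonneg.2 h) hc.1 (by ring) using 1
      module
    · refine ⟨_, Or.inr rfl, ?_⟩
      convert mem_convexHull_triple (x := b) (y := b + w) (z := b + v + w)
        (sub_nonneg.2 hc.2) (sub_nonneg.2 h) ha.1 (by ring) using 1
      module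

lemma isCellPattern_parCell : IsCellPattern parCell where
  finite _ _ _ := finite_singleton _
  subset_par _ _ _ := by rintro t rfl; rfl
  pairwise_disjoint_interior _ _ _ _ := pairwise_singleton _ _
  mem_sUnion b v w a c ha hc := by
    obtain ⟨t, ht, hp⟩ := isCellPattern_antidiagHalves.mem_sUnion b v w ha hc
    exact ⟨_, rfl, isCellPattern_antidiagHalves.subset_par b v w t ht hp⟩

def sectorTiles (C : Pt → Pt → Pt → Set (Set Pt)) (v w : Pt) : Set (Set Pt) :=
  ⋃ n : ℕ × ℕ, C (node v w n) v w

namespace IsCellPattern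

variable {C : Pt → Pt → Pt → Set (Set Pt)} (hC : IsCellPattern C)
include hC

lemma countable_sectorTiles : (sectorTiles C v w).Countable :=
  countable_iUnion fun _ => (hC.finite _ _ _).countable

lemma subset_cone (hvw : 0 ≤ cross v w) {t : Set Pt} (ht : t ∈ sectorTiles C v w) :
    t ⊆ cone v w := by
  obtain ⟨n, hn⟩ := mem_iUnion.1 ht
  exact (hC.subset_par _ v w t hn).trans (par_subset_cone hvw n)

lemma cone_subset_sUnion (hvw : 0 < cross v w) : cone v w ⊆ ⋃₀ sectorTiles C v w := by
  intro p hp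
  obtain ⟨n, a, ha, c, hc, rfl⟩ := exists_node_of_mem_cone hvw hp
  obtain ⟨t, ht, hpt⟩ := hC.mem_sUnion (node v w n) v w ha hc
  exact ⟨t, mem_iUnion.2 ⟨n, ht⟩, hpt⟩

lemma node_mem_sUnion (n : ℕ × ℕ) : node v w n ∈ ⋃₀ sectorTiles C v w := by
  obtain ⟨t, ht, hpt⟩ := hC.mem_sUnion (node v w n) v w (left_mem_Icc.2 zero_le_one)
    (left_mem_Icc.2 zero_le_one)
  exact ⟨t, mem_iUnion.2 ⟨n, ht⟩, by simpa using hpt⟩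

lemma pairwise_disjoint_interior_sectorTiles (hvw : 0 < cross v w) :
    (sectorTiles C v w).Pairwise fun t t' => Disjoint (interior t) (interior t') :=
  pairwise_disjoint_interior_iUnion (pairwise_disjoint_interior_par hvw)
    (fun _ => hC.subset_par _ v w) fun _ => hC.pairwise_disjoint_interior _ v w hvw

end IsCellPattern

/-! ### Congruence with the prototiles -/

def dir (φ : ℝ) : Pt := pt (cos φ) (sin φ)

lemma cross_dir (α β : ℝ) : cross (dir α) (dir β) = sin (β - α) := by
  simp only [cross_apply, dir, pt_apply_zero, pt_apply_one, sin_sub]; ring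

lemma dir_sub_pi (φ : ℝ) : dir (φ - π) = -dir φ :=
  ext_pt (by simp [dir, cos_sub_pi]) (by simp [dir, sin_sub_pi])

lemma dir_add_dir_add_two_pi_div_three (φ : ℝ) :
    dir φ + dir (φ + 2 * π / 3) = dir (φ + π / 3) := by
  have h₁ : φ = φ + π / 3 - π / 3 := by ring
  have h₂ : φ + 2 * π / 3 = φ + π / 3 + π / 3 := by ring
  rw [h₂, h₁, sub_add_cancel]
  refine ext_pt ?_ ?_ <;> simp only [dir, PiLp.add_apply, pt_apply_zero, pt_apply_one, cos_add,
    cos_sub, sin_add, sin_sub, cos_pi_div_three] <;> ring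

def rot (φ : ℝ) : Pt ≃ₗᵢ[ℝ] Pt where
  toFun p := pt (cos φ * p 0 - sin φ * p 1) (sin φ * p 0 + cos φ * p 1)
  invFun p := pt (cos φ * p 0 + sin φ * p 1) (cos φ * p 1 - sin φ * p 0)
  map_add' p q := ext_pt (by simp only [PiLp.add_apply, pt_apply_zero]; ring)
    (by simp only [PiLp.add_apply, pt_apply_one]; ring)
  map_smul' a p := ext_pt
    (by simp only [PiLp.smul_apply, smul_eq_mul, pt_apply_zero, RingHom.id_apply]; ring)
    (by simp only [PiLp.smul_apply, smul_eq_mul, pt_apply_one, RingHom.id_apply]; ring)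
  left_inv p := ext_pt
    (by simp only [pt_apply_zero, pt_apply_one]; linear_combination p 0 * sin_sq_add_cos_sq φ)
    (by simp only [pt_apply_zero, pt_apply_one]; linear_combination p 1 * sin_sq_add_cos_sq φ)
  right_inv p := ext_pt
    (by simp only [pt_apply_zero, pt_apply_one]; linear_combination p 0 * sin_sq_add_cos_sq φ)
    (by simp only [pt_apply_zero, pt_apply_one]; linear_combination p 1 * sin_sq_add_cos_sq φ)
  norm_map' p := by
    simp only [EuclideanSpace.norm_eq, Fin.sum_univ_two, Real.norm_eq_abs, sq_abs]
    congr 1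
    simp only [LinearEquiv.coe_mk, LinearMap.coe_mk, AddHom.coe_mk, pt_apply_zero, pt_apply_one]
    linear_combination (p 0 ^ 2 + p 1 ^ 2) * sin_sq_add_cos_sq φ

lemma rot_dir (φ α : ℝ) : rot φ (dir α) = dir (φ + α) :=
  ext_pt (by simp [rot, dir, cos_add]) (by simp [rot, dir, sin_add])

lemma pt_zero_zero : pt 0 0 = 0 := ext_pt rfl rfl

lemma pt_one_zero : pt 1 0 = dir 0 := ext_pt (by simp [dir]) (by simp [dir])

lemma uT_eq : uT = convexHull ℝ {0, dir 0, dir (π / 3)} := by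
  rw [uT, pt_zero_zero, pt_one_zero, show pt (1 / 2) (√3 / 2) = dir (π / 3) from
    ext_pt (by simp [dir]) (by simp [dir])]

lemma uR_eq (θ : ℝ) : uR θ = convexHull ℝ {0, dir 0, dir θ, dir 0 + dir θ} := by
  rw [uR, pt_zero_zero, pt_one_zero, show pt (1 + cos θ) (sin θ) = dir 0 + dir θ from
    ext_pt (by simp [dir]) (by simp [dir])]
  rfl

lemma exists_convexHull_eq_image_uT {x y z : Pt} (φ : ℝ) (hy : y = x + dir φ)
    (hz : z = x + dir (φ + π / 3)) : ∃ f : Pt ≃ᵢ Pt, convexHull ℝ {x, y, z} = f '' uT := by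
  refine ⟨(rot φ).toIsometryEquiv.trans (IsometryEquiv.addLeft x), ?_⟩
  rw [uT_eq, image_convexHull_isometryEquiv]
  simp [image_insert_eq, rot_dir, hy, hz]

lemma exists_par_eq_image_uR (x : Pt) (φ θ : ℝ) (hv : v = dir φ)
    (hw : w = dir (φ + θ)) : ∃ f : Pt ≃ᵢ Pt, par x v w = f '' uR θ := by
  refine ⟨(rot φ).toIsometryEquiv.trans (IsometryEquiv.addLeft x), ?_⟩
  rw [uR_eq, image_convexHull_isometryEquiv, par]
  simp [image_insert_eq, rot_dir, hv, hw, add_assoc]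

lemma dist_pt (a b c d : ℝ) : dist (pt a b) (pt c d) = √((a - c) ^ 2 + (b - d) ^ 2) := by
  simp [EuclideanSpace.dist_eq, Fin.sum_univ_two, Real.dist_eq, sq_abs]

lemma diam_uT_le_one : diam uT ≤ 1 := by
  rw [uT, convexHull_diam]
  refine diam_le_of_forall_dist_le zero_le_one ?_
  have h3 := sq_sqrt (show (0 : ℝ) ≤ 3 by norm_num)
  rintro p (rfl | rfl | rfl) q (rfl | rfl | rfl) <;> rw [dist_pt, sqrt_le_one] <;> nlinarith

lemma one_lt_diam_uR (θ : ℝ) : 1 < diam (uR θ) := by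
  have hb : Bornology.IsBounded (uR θ) := ((toFinite _).isCompact_convexHull ℝ).isBounded
  have hmem (p : Pt) (hp : p ∈ ({pt 0 0, pt 1 0, pt (cos θ) (sin θ),
      pt (1 + cos θ) (sin θ)} : Set Pt)) : p ∈ uR θ := subset_convexHull ℝ _ hp
  have hθ := sin_sq_add_cos_sq θ
  rcases le_total 0 (cos θ) with hc | hc
  · calc 1 < dist (pt 0 0) (pt (1 + cos θ) (sin θ)) := by
          rw [dist_pt, Real.lt_sqrt zero_le_one]; nlinarith
      _ ≤ diam (uR θ) := dist_le_diam_of_mem hb (hmem _ (by simp)) (hmem _ (by simp))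
  · calc 1 < dist (pt 1 0) (pt (cos θ) (sin θ)) := by
          rw [dist_pt, Real.lt_sqrt zero_le_one]; nlinarith
      _ ≤ diam (uR θ) := dist_le_diam_of_mem hb (hmem _ (by simp)) (hmem _ (by simp))

/-! ### The tiling -/

def ray (θ : ℝ) : Fin 4 → Pt := ![dir 0, dir θ, dir (θ + π / 3), dir (-(2 * π / 3))]

def cellPattern : Fin 4 → Pt → Pt → Pt → Set (Set Pt) :=
  ![parCell, antidiagHalves, parCell, diagHalves]

def prototile (θ : ℝ) : Fin 4 → Set Pt := ![uR θ, uT, uR θ, uT]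

def tiling (θ : ℝ) : Set (Set Pt) :=
  ⋃ i, sectorTiles (cellPattern i) (ray θ i) (ray θ (i + 1))

variable {θ : ℝ}

lemma cross_ray_pos (hθ : 0 < sin θ) (i : Fin 4) : 0 < cross (ray θ i) (ray θ (i + 1)) := by
  have hπ₃ : 0 < sin (π / 3) := sin_pos_of_pos_of_lt_pi (by positivity) (by linarith [pi_pos])
  have h2π₃ : 0 < sin (2 * π / 3) := sin_pos_of_pos_of_lt_pi (by positivity) (by linarith [pi_pos])
  fin_cases i
  · show 0 < cross (dir 0) (dir θ)
    rwa [cross_dir, sub_zero]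
  · show 0 < cross (dir θ) (dir (θ + π / 3))
    rwa [cross_dir, add_sub_cancel_left]
  · show 0 < cross (dir (θ + π / 3)) (dir (-(2 * π / 3)))
    rwa [cross_dir, show -(2 * π / 3) - (θ + π / 3) = -(θ + π) by ring, sin_neg, sin_add_pi,
      neg_neg]
  · show 0 < cross (dir (-(2 * π / 3))) (dir 0)
    rwa [cross_dir, zero_sub, neg_neg]

lemma isCellPattern_cellPattern (i : Fin 4) : IsCellPattern (cellPattern i) := by
  fin_cases i
  exacts [isCellPattern_parCell, isCellPattern_antidiagHalves, isCellPattern_parCell,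
    isCellPattern_diagHalves]

lemma exists_eq_image_prototile {i : Fin 4} {t : Set Pt}
    (ht : t ∈ sectorTiles (cellPattern i) (ray θ i) (ray θ (i + 1))) :
    ∃ f : Pt ≃ᵢ Pt, t = f '' prototile θ i := by
  obtain ⟨n, hn⟩ := mem_iUnion.1 ht
  generalize node _ _ n = b at hn
  fin_cases i
  · obtain rfl : t = par b (dir 0) (dir θ) := hn
    exact exists_par_eq_image_uR b 0 θ rfl (by rw [zero_add])
  · obtain rfl | rfl : t = convexHull ℝ {b, b + dir θ, b + dir (θ + π / 3)} ∨
        t = convexHull ℝ {b + dir θ, b + dir (θ + π / 3), b + dir θ + dir (θ + π / 3)} := hn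
    · exact exists_convexHull_eq_image_uT θ rfl rfl
    · have h := dir_add_dir_add_two_pi_div_three (θ - π / 3)
      rw [show θ - π / 3 + 2 * π / 3 = θ + π / 3 by ring, sub_add_cancel] at h
      rw [insert_comm]
      refine exists_convexHull_eq_image_uT (θ - π / 3) ?_ ?_
      · rw [← h]; abel
      · rw [sub_add_cancel]; abel
  · obtain rfl : t = par b (dir (θ + π / 3)) (dir (-(2 * π / 3))) := hn
    -- seen from its vertex `b + dir (θ + π / 3)`, this rhombus has angle `θ`
    rw [par_eq_par_add]
    refine exists_par_eq_image_uR _ (-(2 * π / 3)) θ rfl ?_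
    rw [show -(2 * π / 3) + θ = θ + π / 3 - π by ring, dir_sub_pi]
  · have h := dir_add_dir_add_two_pi_div_three (-(2 * π / 3))
    rw [show -(2 * π / 3) + 2 * π / 3 = 0 by ring, show -(2 * π / 3) + π / 3 = -(π / 3) by ring]
      at h
    obtain rfl | rfl :
        t = convexHull ℝ {b, b + dir (-(2 * π / 3)), b + dir (-(2 * π / 3)) + dir 0} ∨
        t = convexHull ℝ {b, b + dir 0, b + dir (-(2 * π / 3)) + dir 0} := hn
    · refine exists_convexHull_eq_image_uT _ rfl ?_
      rw [add_assoc, h]; congr 2; ring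
    · rw [pair_comm]
      exact exists_convexHull_eq_image_uT (-(π / 3)) (by rw [add_assoc, h])
        (by rw [neg_add_cancel])

lemma isTilingBy_tiling (hθ : 0 < sin θ) : IsTilingBy (tiling θ) {uT, uR θ} := by
  have hr := cross_ray_pos hθ
  have hC := isCellPattern_cellPattern
  refine ⟨countable_iUnion fun i => (hC i).countable_sectorTiles, ?_, ?_, ?_⟩
  · refine eq_univ_of_forall fun p => ?_
    obtain ⟨i, hi⟩ := exists_mem_cone hr p
    obtain ⟨t, ht, hpt⟩ := (hC i).cone_subset_sUnion (hr i) hi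
    exact ⟨t, mem_iUnion.2 ⟨i, ht⟩, hpt⟩
  · intro t ht s hs hts
    exact disjoint_iff_inter_eq_empty.1 <| pairwise_disjoint_interior_iUnion
      (pairwise_disjoint_interior_cone hr) (fun i _ => (hC i).subset_cone (hr i).le)
      (fun i => (hC i).pairwise_disjoint_interior_sectorTiles (hr i)) ht hs hts
  · intro t ht
    obtain ⟨i, hi⟩ := mem_iUnion.1 ht
    obtain ⟨f, rfl⟩ := exists_eq_image_prototile hi
    exact ⟨prototile θ i, by fin_cases i <;> simp [prototile], f, rfl⟩

lemma exists_mem_tiling_eq_image (i : Fin 4) :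
    ∃ t ∈ tiling θ, ∃ f : Pt ≃ᵢ Pt, t = f '' prototile θ i := by
  obtain ⟨t, ht, -⟩ := (isCellPattern_cellPattern i).node_mem_sUnion
    (v := ray θ i) (w := ray θ (i + 1)) (0, 0)
  exact ⟨t, mem_iUnion.2 ⟨i, ht⟩, exists_eq_image_prototile ht⟩

lemma diam_eq_of_mem_sectorTiles {i : Fin 4} {t : Set Pt}
    (ht : t ∈ sectorTiles (cellPattern i) (ray θ i) (ray θ (i + 1))) :
    diam t = diam (prototile θ i) := by
  obtain ⟨f, rfl⟩ := exists_eq_image_prototile ht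
  exact f.diam_image _

lemma node_mem_sUnion_tiling {P : ℝ → Prop} (i : Fin 4) (n : ℕ × ℕ)
    (hP : P (diam (prototile θ i))) :
    node (ray θ i) (ray θ (i + 1)) n ∈ ⋃₀ {t ∈ tiling θ | P (diam t)} := by
  obtain ⟨t, ht, hpt⟩ := (isCellPattern_cellPattern i).node_mem_sUnion n
  exact ⟨t, ⟨mem_iUnion.2 ⟨i, ht⟩, (diam_eq_of_mem_sectorTiles ht).symm ▸ hP⟩, hpt⟩

def rhombusUnion (θ : ℝ) : Set Pt := ⋃₀ {t ∈ tiling θ | 1 < diam t}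

def triangleUnion (θ : ℝ) : Set Pt := ⋃₀ {t ∈ tiling θ | diam t ≤ 1}

lemma rhombusUnion_subset (hθ : 0 < sin θ) :
    rhombusUnion θ ⊆ cone (ray θ 0) (ray θ 1) ∪ cone (ray θ 2) (ray θ 3) := by
  rintro p ⟨t, ⟨ht, hdt⟩, hpt⟩
  obtain ⟨i, hi⟩ := mem_iUnion.1 ht
  have hpi := (isCellPattern_cellPattern i).subset_cone (cross_ray_pos hθ i).le hi hpt
  rw [diam_eq_of_mem_sectorTiles hi] at hdt
  fin_cases i
  exacts [Or.inl hpi, absurd hdt (not_lt.2 diam_uT_le_one), Or.inr hpi,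
    absurd hdt (not_lt.2 diam_uT_le_one)]

lemma triangleUnion_subset (hθ : 0 < sin θ) :
    triangleUnion θ ⊆ cone (ray θ 1) (ray θ 2) ∪ cone (ray θ 3) (ray θ 0) := by
  rintro p ⟨t, ⟨ht, hdt⟩, hpt⟩
  obtain ⟨i, hi⟩ := mem_iUnion.1 ht
  have hpi := (isCellPattern_cellPattern i).subset_cone (cross_ray_pos hθ i).le hi hpt
  rw [diam_eq_of_mem_sectorTiles hi] at hdt
  fin_cases i
  exacts [absurd hdt (not_le.2 (one_lt_diam_uR θ)), Or.inl hpi,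
    absurd hdt (not_le.2 (one_lt_diam_uR θ)), Or.inr hpi]

lemma exists_cross_ray_eq_zero (hθ : 0 < sin θ) {p : Pt}
    (hp : p ∈ rhombusUnion θ ∩ triangleUnion θ) : ∃ i, cross (ray θ i) p = 0 := by
  rcases rhombusUnion_subset hθ hp.1 with h₁ | h₁ <;>
    rcases triangleUnion_subset hθ hp.2 with h₂ | h₂
  exacts [⟨1, cross_eq_zero_of_mem_cone_of_mem_cone h₁ h₂⟩,
    ⟨0, cross_eq_zero_of_mem_cone_of_mem_cone h₂ h₁⟩,
    ⟨2, cross_eq_zero_of_mem_cone_of_mem_cone h₂ h₁⟩,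
    ⟨3, cross_eq_zero_of_mem_cone_of_mem_cone h₁ h₂⟩]

lemma natCast_smul_ray_mem (n : ℕ) {i : Fin 4} (hi : i = 0 ∨ i = 1) :
    (n : ℝ) • ray θ i ∈ rhombusUnion θ ∩ triangleUnion θ := by
  have hR := node_mem_sUnion_tiling (θ := θ) (P := (1 < ·)) 0
  have hT := node_mem_sUnion_tiling (θ := θ) (P := (· ≤ 1))
  rcases hi with rfl | rfl
  · rw [← node_natCast_zero (ray θ 0) (ray θ 1)]
    refine ⟨hR (n, 0) (one_lt_diam_uR θ), ?_⟩
    rw [node_natCast_zero, ← node_zero_natCast (ray θ 3)]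
    exact hT 3 (0, n) diam_uT_le_one
  · rw [← node_zero_natCast (ray θ 0)]
    refine ⟨hR (0, n) (one_lt_diam_uR θ), ?_⟩
    rw [node_zero_natCast, ← node_natCast_zero _ (ray θ 2)]
    exact hT 1 (n, 0) diam_uT_le_one

lemma nonperiodic_tiling (hθ : 0 < sin θ) : Nonperiodic (tiling θ) := by
  intro v hv hper
  have hmaps : ∀ t ∈ tiling θ, (· + v) '' t ∈ tiling θ := fun t ht =>
    hper ▸ mem_image_of_mem _ ht
  have hdiam (t : Set Pt) : diam ((· + v) '' t) = diam t := (IsometryEquiv.addRight v).diam_image t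
  have hinv (p : Pt) (hp : p ∈ rhombusUnion θ ∩ triangleUnion θ) :
      p + v ∈ rhombusUnion θ ∩ triangleUnion θ :=
    ⟨add_mem_sUnion_sep hmaps (fun t ht => (hdiam t).symm ▸ ht) hp.1,
      add_mem_sUnion_sep hmaps (fun t ht => (hdiam t).symm ▸ ht) hp.2⟩
  have hL (i : Fin 4) : ray θ i ≠ 0 := ne_zero_of_cross_ne_zero_left (cross_ray_pos hθ i).ne'
  have h₀ : cross (ray θ 0) v = 0 := cross_eq_zero_of_add_mem hL
    (fun _ => exists_cross_ray_eq_zero hθ) hinv fun n => natCast_smul_ray_mem n (Or.inl rfl)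
  have h₁ : cross (ray θ 1) v = 0 := cross_eq_zero_of_add_mem hL
    (fun _ => exists_cross_ray_eq_zero hθ) hinv fun n => natCast_smul_ray_mem n (Or.inr rfl)
  refine (cross_ray_pos hθ 0).ne' (cross_eq_zero_of_cross_eq_zero hv ?_ ?_)
  · rw [cross_swap, h₀, neg_zero]
  · rw [cross_swap, zero_add, h₁, neg_zero]

end TriangleRhombusTiling

/-- For every angle θ with 0 < θ < π, there is a non-periodic tiling of the
plane by isometric copies of the unit equilateral triangle and the unit rhombus of angle θ,
in which both prototiles are used. -/
theorem stmt_0 :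
    ∀ θ : ℝ, 0 < θ → θ < Real.pi →
      ∃ 𝒯 : Set (Set Pt),
        IsTilingBy 𝒯 {uT, uR θ} ∧
        (∃ t ∈ 𝒯, ∃ f : Pt ≃ᵢ Pt, t = f '' uT) ∧
        (∃ t ∈ 𝒯, ∃ f : Pt ≃ᵢ Pt, t = f '' uR θ) ∧
        Nonperiodic 𝒯 := by
  intro θ hθ₀ hθπ
  have hθ := Real.sin_pos_of_pos_of_lt_pi hθ₀ hθπ
  exact ⟨TriangleRhombusTiling.tiling θ, TriangleRhombusTiling.isTilingBy_tiling hθ,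
    TriangleRhombusTiling.exists_mem_tiling_eq_image 1,
    TriangleRhombusTiling.exists_mem_tiling_eq_image 0,
    TriangleRhombusTiling.nonperiodic_tiling hθ⟩
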